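/- Let W be an integral domain and E(z) = z^e + p·θ(z) ∈ W[[z]] with θ(0) a unit and p ≠ 0 in W. If f ∈ W[[z]] lies in the ideal generated by E(z) and f ≡ E(z) modulo (z^{e+1}), then f = u·E(z) for some unit u of W[[z]] with u ≡ 1 modulo (z). -/

import Mathlib

open PowerSeries

theorem PowerSeries.constantCoeff_eq_one_of_X_dvd_mul_sub {R : Type*} [CommRing R] [NoZeroDivisors R]
    {E g : R⟦X⟧} (hE : constantCoeff E ≠ 0) (h : X ∣ g * E - E) : constantCoeff g = 1 := by
  rw [X_dvd_iff, ← sub_one_mul, map_mul, map_sub, map_one] at h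
  exact sub_eq_zero.mp ((mul_eq_zero.mp h).resolve_right hE)

theorem PowerSeries.constantCoeff_X_pow_add_C_mul {R : Type*} [CommRing R] {e : ℕ} (he : e ≠ 0)
    (p : R) (θ : R⟦X⟧) : constantCoeff (X ^ e + C p * θ) = p * constantCoeff θ := by
  simp [zero_pow he]

theorem eisenstein_associate_unit_general
    (W : Type*) [CommRing W] [IsDomain W]
    (p : W) (hp : p ≠ 0)
    (e : ℕ) (he : 1 ≤ e)
    (θ : PowerSeries W) (hθ : IsUnit (PowerSeries.constantCoeff θ))
    (E : PowerSeries W)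
    (hE : E = PowerSeries.X ^ e + PowerSeries.C p * θ)
    (f : PowerSeries W)
    (hf1 : f ∈ Ideal.span {E})
    (hf2 : f - E ∈ Ideal.span {(PowerSeries.X : PowerSeries W) ^ (e + 1)}) :
    ∃ u : (PowerSeries W)ˣ,
      f = (u : PowerSeries W) * E ∧
        (u : PowerSeries W) - 1 ∈ Ideal.span {(PowerSeries.X : PowerSeries W)} := by
  obtain ⟨g, rfl⟩ := Ideal.mem_span_singleton'.mp hf1
  have hE0 : constantCoeff E ≠ 0 := by
    rw [hE, constantCoeff_X_pow_add_C_mul (by omega)]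
    exact mul_ne_zero hp hθ.ne_zero
  have hX : X ∣ g * E - E :=
    (dvd_pow_self X (Nat.succ_ne_zero e)).trans (Ideal.mem_span_singleton.mp hf2)
  have hg : constantCoeff g = 1 := constantCoeff_eq_one_of_X_dvd_mul_sub hE0 hX
  obtain ⟨u, rfl⟩ := isUnit_iff_constantCoeff.mpr (hg ▸ isUnit_one)
  refine ⟨u, rfl, ?_⟩
  rw [Ideal.mem_span_singleton, X_dvd_iff, map_sub, map_one, hg, sub_self]

/-- Let `W` be a local integral domain and `E(z) = z^e + p·θ(z) ∈ W[[z]]`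
with `θ(0)` a unit, `p ≠ 0` in `W` and `p` in the maximal ideal (a non-unit).
If `f ∈ W[[z]]` lies in the ideal generated by `E(z)` and `f ≡ E(z)` modulo `(z^{e+1})`,
then `f = u·E(z)` for some unit `u` of `W[[z]]` with `u ≡ 1` modulo `(z)`. -/
theorem eisenstein_associate_unit
    (W : Type*) [CommRing W] [IsDomain W] [IsLocalRing W]
    (p : W) (hp : p ≠ 0) (hpu : ¬ IsUnit p)
    (e : ℕ) (he : 1 ≤ e)
    (θ : PowerSeries W) (hθ : IsUnit (PowerSeries.constantCoeff θ))
    (E : PowerSeries W)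
    (hE : E = PowerSeries.X ^ e + PowerSeries.C p * θ)
    (f : PowerSeries W)
    (hf1 : f ∈ Ideal.span {E})
    (hf2 : f - E ∈ Ideal.span {(PowerSeries.X : PowerSeries W) ^ (e + 1)}) :
    ∃ u : (PowerSeries W)ˣ,
      f = (u : PowerSeries W) * E ∧
        (u : PowerSeries W) - 1 ∈ Ideal.span {(PowerSeries.X : PowerSeries W)} :=
  eisenstein_associate_unit_general W p hp e he θ hθ E hE f hf1 hf2
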